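/- The exponential generating function of the signed descent sums equals tanh: Σ_{n≥1} (φ(n)/n!) x^n = tanh(x) as formal power series over ℚ (equivalently, as an identity of real analytic functions near 0), where φ(n) = Σ_{σ ∈ S_n} (-1)^{d(σ)}. -/

import Mathlib

/-- The descent number of a list: the number of indices `i` with `l.get (i+1) < l.get i`. -/
def descList (l : List ℕ) : ℕ := (l.zip l.tail).countP fun p => decide (p.2 < p.1)

/-- The descent number of a permutation of `{1,…,n}`, read as the word `σ(1) … σ(n)`. -/
def permDesc {n : ℕ} (σ : Equiv.Perm (Fin n)) : ℕ :=
  descList ((List.finRange n).map fun i => ((σ i : Fin n) : ℕ))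

/-- The signed descent sum `φ(n) = Σ_{σ ∈ S_n} (-1)^{d(σ)}`. -/
def phi (n : ℕ) : ℤ := ∑ σ : Equiv.Perm (Fin n), (-1) ^ permDesc σ
/-- The formal power series of `cosh` over `ℚ`. -/
noncomputable def coshQ : PowerSeries ℚ :=
  PowerSeries.mk fun n => if Even n then 1 / n.factorial else 0

/-- The formal power series of `sinh` over `ℚ`. -/
noncomputable def sinhQ : PowerSeries ℚ :=
  PowerSeries.mk fun n => if Odd n then 1 / n.factorial else 0

/-- The formal power series of `tanh` over `ℚ`. -/
noncomputable def tanhQ : PowerSeries ℚ := sinhQ * coshQ⁻¹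

/-!
Inserting the new maximum `n + 1` at position `p` into a permutation of `{1,…,n}` keeps the
descents of the two blocks on either side and adds one more unless the block on the right is
empty. The pair of blocks runs over a choice of `p` values together with a relative order of each
block, so `φ(n + 1) = ∑ₚ ± C(n, p) φ(p) φ(n - p)`, the sign being `+` only for `p = n`. For the
series `F = ∑ φ(n) xⁿ / n!` this says `F' = F (2 - F)` with `F(0) = 1`. Since `tanh' = 1 - tanh²`,
the series `1 + tanh` satisfies the same Riccati equation, and such an equation determines a power
series from its constant term.
-/

open Finset

lemma descList_cons_cons (a b : ℕ) (l : List ℕ) :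
    descList (a :: b :: l) = (if b < a then 1 else 0) + descList (b :: l) := by
  simp only [descList, List.tail_cons, List.zip_cons_cons, List.countP_cons, decide_eq_true_eq]
  omega

lemma descList_map_eq_of_lt_iff {α : Type*} (l : List α) {f g : α → ℕ}
    (h : ∀ a ∈ l, ∀ b ∈ l, f a < f b ↔ g a < g b) :
    descList (l.map f) = descList (l.map g) := by
  induction l with
  | nil => rfl
  | cons a l ih =>
    cases l with
    | nil => rfl
    | cons b l =>
      simp only [List.map_cons] at ih ⊢
      rw [descList_cons_cons, descList_cons_cons,
        ih fun x hx y hy => h x (List.mem_cons_of_mem _ hx) y (List.mem_cons_of_mem _ hy)]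
      simp only [h b (by simp) a (by simp)]

lemma descList_append_cons_of_forall_lt {A B : List ℕ} {x : ℕ} (hA : ∀ a ∈ A, a < x)
    (hB : ∀ b ∈ B, b < x) :
    descList (A ++ x :: B) = descList A + descList B + if B = [] then 0 else 1 := by
  induction A with
  | nil =>
    cases B with
    | nil => rfl
    | cons b B =>
      rw [List.nil_append, descList_cons_cons, if_pos (hB b (by simp)),
        if_neg (List.cons_ne_nil b B)]
      change _ = 0 + _ + 1
      omega
  | cons a A ih =>
    have ih := ih fun y hy => hA y (List.mem_cons_of_mem _ hy)
    cases A with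
    | nil =>
      rw [List.nil_append] at ih
      rw [List.singleton_append, descList_cons_cons, ih, if_neg (hA a (by simp)).asymm, zero_add]
      rfl
    | cons a' A =>
      simp only [List.cons_append] at ih ⊢
      rw [descList_cons_cons, ih, descList_cons_cons]
      ring

def wordDesc {m : ℕ} (f : Fin m → ℕ) : ℕ := descList (List.ofFn f)

lemma permDesc_eq_wordDesc {n : ℕ} (σ : Equiv.Perm (Fin n)) :
    permDesc σ = wordDesc fun i => (σ i : ℕ) := by
  rw [permDesc, wordDesc, List.ofFn_eq_map]

lemma wordDesc_eq_of_lt_iff {m : ℕ} {f g : Fin m → ℕ} (h : ∀ i j, f i < f j ↔ g i < g j) :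
    wordDesc f = wordDesc g := by
  simp only [wordDesc, List.ofFn_eq_map]
  exact descList_map_eq_of_lt_iff _ fun a _ b _ => h a b

section Shuffle

open Equiv Fin

variable {p q : ℕ}

lemma card_compl_eq_of_card_eq {S : Finset (Fin (p + q))} (hS : #S = p) : #Sᶜ = q := by
  rw [card_compl, Fintype.card_fin, hS]
  omega

/-- The permutation of `Fin (p + q)` mapping the first `p` positions onto `S` in the relative
order `τ`, and the last `q` positions onto `Sᶜ` in the relative order `υ`. -/
noncomputable def shuffle (S : {S : Finset (Fin (p + q)) // #S = p}) (τ : Perm (Fin p))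
    (υ : Perm (Fin q)) : Perm (Fin (p + q)) :=
  finSumFinEquiv.symm.trans <| (sumCongr τ υ).trans <|
    (sumCongr (S.1.orderIsoOfFin S.2).toEquiv
      ((S.1ᶜ.orderIsoOfFin (card_compl_eq_of_card_eq S.2)).toEquiv.trans
        (subtypeEquivRight fun _ => mem_compl))).trans
    (sumCompl (· ∈ S.1))

variable (S : {S : Finset (Fin (p + q)) // #S = p}) (τ : Perm (Fin p)) (υ : Perm (Fin q))

lemma shuffle_castAdd (i : Fin p) :
    shuffle S τ υ (castAdd q i) = S.1.orderEmbOfFin S.2 (τ i) := by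
  simp [shuffle]

lemma shuffle_natAdd (j : Fin q) :
    shuffle S τ υ (natAdd p j) = S.1ᶜ.orderEmbOfFin (card_compl_eq_of_card_eq S.2) (υ j) := by
  simp [shuffle]

lemma image_shuffle_castAdd : univ.image (fun i => shuffle S τ υ (castAdd q i)) = S.1 := by
  simp_rw [shuffle_castAdd]
  calc univ.image (fun i => S.1.orderEmbOfFin S.2 (τ i))
      _ = (univ.image τ).image (S.1.orderEmbOfFin S.2) := by rw [image_image]; rfl
      _ = S.1 := by rw [image_univ_equiv, image_orderEmbOfFin_univ]

lemma wordDesc_shuffle_castAdd :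
    (wordDesc fun i => (shuffle S τ υ (castAdd q i) : ℕ)) = permDesc τ := by
  rw [permDesc_eq_wordDesc]
  refine wordDesc_eq_of_lt_iff fun i j => ?_
  simp only [shuffle_castAdd, Fin.val_fin_lt, OrderEmbedding.lt_iff_lt]

lemma wordDesc_shuffle_natAdd :
    (wordDesc fun j => (shuffle S τ υ (natAdd p j) : ℕ)) = permDesc υ := by
  rw [permDesc_eq_wordDesc]
  refine wordDesc_eq_of_lt_iff fun i j => ?_
  simp only [shuffle_natAdd, Fin.val_fin_lt, OrderEmbedding.lt_iff_lt]

variable (p q) in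
lemma shuffle_bijective :
    Function.Bijective
      fun x : {S : Finset (Fin (p + q)) // #S = p} × Perm (Fin p) × Perm (Fin q) =>
        shuffle x.1 x.2.1 x.2.2 := by
  refine (Fintype.bijective_iff_injective_and_card _).2 ⟨?_, ?_⟩
  · rintro ⟨S, τ, υ⟩ ⟨S', τ', υ'⟩ h
    dsimp only at h
    obtain rfl : S = S' := Subtype.ext <| by
      rw [← image_shuffle_castAdd S τ υ, ← image_shuffle_castAdd S' τ' υ', h]
    obtain rfl : τ = τ' := Equiv.ext fun i => (S.1.orderEmbOfFin S.2).injective <| by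
      rw [← shuffle_castAdd S τ υ, ← shuffle_castAdd S τ' υ', h]
    obtain rfl : υ = υ' := Equiv.ext fun j => (S.1ᶜ.orderEmbOfFin _).injective <| by
      rw [← shuffle_natAdd S τ υ, ← shuffle_natAdd S τ υ', h]
    rfl
  · simp only [Fintype.card_prod, Fintype.card_finset_len, Fintype.card_perm, Fintype.card_fin]
    rw [← Nat.add_choose_mul_factorial_mul_factorial, Nat.choose_symm_add]
    ring

variable (p q) in
theorem sum_perm_wordDesc_mul_wordDesc {R : Type*} [CommSemiring R] (f g : ℕ → R) :
    ∑ ρ : Perm (Fin (p + q)),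
        f (wordDesc fun i => (ρ (castAdd q i) : ℕ)) *
          g (wordDesc fun j => (ρ (natAdd p j) : ℕ)) =
      (p + q).choose p *
        ((∑ τ : Perm (Fin p), f (permDesc τ)) * ∑ υ : Perm (Fin q), g (permDesc υ)) := by
  rw [← Fintype.sum_bijective _ (shuffle_bijective p q)
    (fun x => f (permDesc x.2.1) * g (permDesc x.2.2))
    _ fun x => by rw [wordDesc_shuffle_castAdd, wordDesc_shuffle_natAdd]]
  simp only [Fintype.sum_prod_type]
  rw [Finset.sum_const, card_univ, Fintype.card_finset_len, Fintype.card_fin, nsmul_eq_mul,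
    sum_mul_sum]

end Shuffle

section InsertMax

open Equiv Fin

/-- The permutation whose word is that of `ρ` with the new maximal value `n` inserted at
position `k`. -/
def insertMax {n : ℕ} (k : Fin (n + 1)) (ρ : Perm (Fin n)) : Perm (Fin (n + 1)) :=
  (finSuccEquiv' k).trans ((optionCongr ρ).trans (finSuccEquiv' (last n)).symm)

variable {n : ℕ} (k : Fin (n + 1)) (ρ : Perm (Fin n))

@[simp]
lemma insertMax_self : insertMax k ρ k = last n := by
  simp [insertMax]

@[simp]
lemma insertMax_succAbove (i : Fin n) : insertMax k ρ (k.succAbove i) = (ρ i).castSucc := by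
  simp [insertMax, succAbove_last]

variable (n) in
lemma insertMax_bijective :
    Function.Bijective fun x : Fin (n + 1) × Perm (Fin n) => insertMax x.1 x.2 := by
  refine (Fintype.bijective_iff_injective_and_card _).2 ⟨?_, ?_⟩
  · rintro ⟨k, ρ⟩ ⟨k', ρ'⟩ h
    dsimp only at h
    obtain rfl : k = k' := by
      by_contra hne
      obtain ⟨i, rfl⟩ := exists_succAbove_eq hne
      have := congrArg (fun σ => σ (k'.succAbove i)) h
      simp only [insertMax_self, insertMax_succAbove] at this
      exact (castSucc_lt_last (ρ' i)).ne' this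
    obtain rfl : ρ = ρ' := Equiv.ext fun i =>
      castSucc_injective _ <| by simpa using congrArg (· (k.succAbove i)) h
    rfl
  · simp [Fintype.card_perm, Nat.factorial_succ]

lemma permDesc_insertMax (p q : ℕ) (ρ : Perm (Fin (p + q))) :
    permDesc (insertMax ⟨p, by omega⟩ ρ) =
      (wordDesc fun i => (ρ (castAdd q i) : ℕ)) + (wordDesc fun j => (ρ (natAdd p j) : ℕ)) +
        if q = 0 then 0 else 1 := by
  set k : Fin (p + q + 1) := ⟨p, by omega⟩
  have hword : List.ofFn (fun i => (insertMax k ρ i : ℕ)) =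
      List.ofFn (fun i => (ρ (castAdd q i) : ℕ)) ++
        (p + q) :: List.ofFn fun j => (ρ (natAdd p j) : ℕ) := by
    rw [List.ofFn_add (n := p) (m := q + 1), List.ofFn_succ]
    congr 1
    · refine congrArg List.ofFn (funext fun i => ?_)
      have : (castLE (by omega) i : Fin (p + q + 1)) = k.succAbove (castAdd q i) := by
        rw [succAbove_of_castSucc_lt _ _ (by simp [k, Fin.lt_def])]
        rfl
      rw [this, insertMax_succAbove, val_castSucc]
    · congr 1
      · have : (natAdd p 0 : Fin (p + (q + 1))) = k := rfl
        rw [this, insertMax_self, val_last]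
      · refine congrArg List.ofFn (funext fun j => ?_)
        have : (natAdd p j.succ : Fin (p + (q + 1))) = k.succAbove (natAdd p j) := by
          rw [succAbove_of_le_castSucc _ _ (by simp [k, Fin.le_def])]
          ext
          simp [Nat.add_assoc]
        rw [this, insertMax_succAbove, val_castSucc]
  rw [permDesc_eq_wordDesc, wordDesc, hword, descList_append_cons_of_forall_lt, wordDesc, wordDesc]
  all_goals simp

end InsertMax

lemma phi_zero : phi 0 = 1 := rfl

lemma sum_neg_one_pow_permDesc_insertMax (p q : ℕ) :
    ∑ ρ : Equiv.Perm (Fin (p + q)), (-1 : ℤ) ^ permDesc (insertMax ⟨p, by omega⟩ ρ) =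
      (if q = 0 then 1 else -1) * (p + q).choose p * phi p * phi q := by
  simp_rw [permDesc_insertMax, pow_add, ← sum_mul]
  rw [sum_perm_wordDesc_mul_wordDesc p q (fun d => (-1 : ℤ) ^ d) fun d => (-1 : ℤ) ^ d, phi, phi]
  split_ifs <;> ring

theorem phi_succ (n : ℕ) :
    phi (n + 1) = ∑ pq ∈ antidiagonal n,
      (if pq.2 = 0 then 1 else -1) * n.choose pq.1 * phi pq.1 * phi pq.2 := by
  rw [phi, ← Fintype.sum_bijective _ (insertMax_bijective n) _ _ fun _ => rfl,
    Fintype.sum_prod_type, Nat.sum_antidiagonal_eq_sum_range_succ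
      fun p q => (if q = 0 then 1 else -1) * n.choose p * phi p * phi q, sum_range]
  refine sum_congr rfl fun ⟨k, hk⟩ _ => ?_
  obtain ⟨q, rfl⟩ : ∃ q, n = k + q := ⟨n - k, by omega⟩
  simpa using sum_neg_one_pow_permDesc_insertMax k q

open PowerSeries

theorem PowerSeries.eq_of_derivative_eq_mul_sub {K : Type*} [Field K] [CharZero K] {a f g : K⟦X⟧}
    (h₀ : constantCoeff f = constantCoeff g) (hf : d⁄dX K f = f * (a - f))
    (hg : d⁄dX K g = g * (a - g)) : f = g := by
  ext n
  induction n using Nat.strong_induction_on with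
  | _ n ih =>
    rcases n with _ | n
    · simpa using h₀
    have hcoeff : coeff n (f * (a - f)) = coeff n (g * (a - g)) := by
      simp only [coeff_mul, map_sub]
      refine sum_congr rfl fun ⟨i, j⟩ hij => ?_
      have hn : i + j = n := mem_antidiagonal.1 hij
      rw [ih i (by omega), ih j (by omega)]
    have := coeff_derivative f n
    rw [hf, hcoeff, ← hg, coeff_derivative] at this
    exact (mul_right_cancel₀ (Nat.cast_add_one_ne_zero n) this).symm

noncomputable def phiEGF : PowerSeries ℚ := mk fun n => (phi n : ℚ) / n.factorial

lemma constantCoeff_phiEGF : constantCoeff phiEGF = 1 := by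
  simp [phiEGF, ← coeff_zero_eq_constantCoeff_apply, phi_zero]

lemma derivative_phiEGF : d⁄dX ℚ phiEGF = phiEGF * (2 - phiEGF) := by
  ext n
  have hsign (q : ℕ) : coeff q (2 - phiEGF) = (if q = 0 then 1 else -1) * coeff q phiEGF := by
    rw [map_sub, ← map_ofNat C 2, coeff_C]
    rcases q with _ | q <;> norm_num [phiEGF, phi_zero]
  rw [coeff_derivative, coeff_mul, sum_congr rfl fun pq _ => by rw [hsign]]
  simp only [phiEGF, coeff_mk]
  rw [phi_succ, Nat.factorial_succ]
  push_cast
  rw [div_mul_eq_mul_div, mul_comm _ (n.factorial : ℚ), mul_div_mul_right _ _ (by positivity),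
    sum_div]
  refine sum_congr rfl fun ⟨p, q⟩ hpq => ?_
  obtain rfl : p + q = n := mem_antidiagonal.1 hpq
  rw [Nat.cast_add_choose]
  field_simp

lemma constantCoeff_coshQ : constantCoeff coshQ = 1 := by
  simp [coshQ, ← coeff_zero_eq_constantCoeff_apply]

lemma constantCoeff_sinhQ : constantCoeff sinhQ = 0 := by
  simp [sinhQ, ← coeff_zero_eq_constantCoeff_apply]

lemma derivative_sinhQ : d⁄dX ℚ sinhQ = coshQ := by
  ext n
  rw [coeff_derivative]
  simp only [sinhQ, coshQ, coeff_mk, Nat.odd_add_one, Nat.not_odd_iff_even, Nat.factorial_succ]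
  push_cast
  split_ifs
  · field_simp
  · exact zero_mul _

lemma derivative_coshQ : d⁄dX ℚ coshQ = sinhQ := by
  ext n
  rw [coeff_derivative]
  simp only [sinhQ, coshQ, coeff_mk, Nat.even_add_one, Nat.not_even_iff_odd, Nat.factorial_succ]
  push_cast
  split_ifs
  · field_simp
  · exact zero_mul _

lemma derivative_tanhQ : d⁄dX ℚ tanhQ = 1 - tanhQ ^ 2 := by
  have hcosh : coshQ * coshQ⁻¹ = 1 := PowerSeries.mul_inv_cancel _ (by simp [constantCoeff_coshQ])
  rw [tanhQ, Derivation.leibniz, derivative_inv', derivative_sinhQ, derivative_coshQ, smul_eq_mul,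
    smul_eq_mul]
  linear_combination hcosh

lemma constantCoeff_tanhQ : constantCoeff tanhQ = 0 := by
  rw [tanhQ, map_mul, constantCoeff_sinhQ, zero_mul]

/-- the exponential generating function of the signed descent sums equals
`tanh`: `Σ_{n≥1} (φ(n)/n!) xⁿ = tanh(x)` as formal power series over `ℚ`. -/
theorem egf_phi_eq_tanh :
    PowerSeries.mk (fun n => if n = 0 then 0 else (phi n : ℚ) / n.factorial) = tanhQ := by
  have h : phiEGF = 1 + tanhQ := by
    refine eq_of_derivative_eq_mul_sub (a := 2) ?_ derivative_phiEGF ?_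
    · rw [map_add, constantCoeff_phiEGF, constantCoeff_tanhQ, map_one, add_zero]
    · rw [map_add, derivative_one, derivative_tanhQ]
      ring
  rw [eq_sub_of_add_eq' h.symm]
  ext n
  rcases n with _ | n <;> simp [phiEGF, phi_zero]
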